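/- Let K be a field and n ≥ 5. The algebras K H_{n-1} and K J_{n-1} are not isomorphic: both are commutative, but the two-sided annihilator of K H_{n-1} has dimension 2 (spanned by v and u^{n-2}) while the annihilator of K J_{n-1} has dimension 1 (spanned by u^{n-2}). -/

import Mathlib

/-- `sgPow S i` is the set `Sⁱ` of all products of `i` elements of `S`
(with the convention `S⁰ = S¹ = S`). -/
def sgPow (S : Type*) [Mul S] : ℕ → Set S
  | 0 => Set.univ
  | 1 => Set.univ
  | n + 2 => Set.image2 (· * ·) (sgPow S (n + 1)) Set.univ

/-- A semigroup with zero is nilpotent of class `c` if `S^(c+1) = {0}` and `S^c ≠ {0}`. -/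
def IsNilpotentOfClass (S : Type*) [SemigroupWithZero S] (c : ℕ) : Prop :=
  sgPow S (c + 1) = {0} ∧ sgPow S c ≠ {0}

/-- `mpow x i` is the power `xⁱ` in a magma, for `i ≥ 1` (with `mpow x 0 = x` by convention). -/
def mpow {S : Type*} [Mul S] (x : S) : ℕ → S
  | 0 => x
  | 1 => x
  | n + 2 => mpow x (n + 1) * x
section AlgebraDefs

variable (K : Type*) [Field K] (A : Type*) [NonUnitalRing A] [Module K A]
  [SMulCommClass K A A] [IsScalarTower K A A]

/-- `algPow K A i` is the submodule `Aⁱ` spanned by all products of `i` elements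
(with `A⁰ = A¹ = A`). -/
def algPow : ℕ → Submodule K A
  | 0 => ⊤
  | 1 => ⊤
  | n + 2 => Submodule.span K (Set.image2 (· * ·) ((algPow (n + 1) : Submodule K A) : Set A) Set.univ)

/-- The dimension of the layer `Aⁱ/Aⁱ⁺¹`. -/
noncomputable def algLayerDim (i : ℕ) : ℕ :=
  Module.finrank K
    (↥(algPow K A i) ⧸ (algPow K A (i + 1)).comap (algPow K A i).subtype)

/-- The coclass of the nilpotent quotient `A/Aⁱ`, namely `dim (A/Aⁱ) - (i - 1)`. -/
noncomputable def algCcQuot (i : ℕ) : ℕ :=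
  Module.finrank K (A ⧸ algPow K A i) - (i - 1)

/-- A finitely generated residually nilpotent algebra has coclass `r` if the coclasses
of its nilpotent quotients `A/Aⁱ` converge to `r`. -/
def HasCoclassAlg (r : ℕ) : Prop :=
  ∀ᶠ i in Filter.atTop, algCcQuot K A i = r

/-- The two-sided annihilator of an algebra, as a submodule. -/
def twoSidedAnn : Submodule K A where
  carrier := {a | (∀ b, a * b = 0) ∧ ∀ b, b * a = 0}
  add_mem' := by
    intro a b ha hb
    exact ⟨fun c => by rw [add_mul, ha.1 c, hb.1 c, add_zero],
           fun c => by rw [mul_add, ha.2 c, hb.2 c, add_zero]⟩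
  zero_mem' := ⟨fun b => zero_mul b, fun b => mul_zero b⟩
  smul_mem' := by
    intro k a ha
    exact ⟨fun b => by rw [smul_mul_assoc, ha.1 b, smul_zero],
           fun b => by rw [mul_smul_comm, ha.2 b, smul_zero]⟩

/-- The right annihilator of an algebra, as a submodule. -/
def rightAnn : Submodule K A where
  carrier := {a | ∀ b, b * a = 0}
  add_mem' := by
    intro a b ha hb c
    rw [mul_add, ha c, hb c, add_zero]
  zero_mem' := fun b => mul_zero b
  smul_mem' := by
    intro k a ha b
    rw [mul_smul_comm, ha b, smul_zero]

end AlgebraDefs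

/-- `IsContractedAlgebra K f` asserts that `f : S → A` exhibits the algebra `A` as the
contracted semigroup algebra of the semigroup-with-zero `S` over the field `K`:
`f` is multiplicative, sends zero to zero, and the images of the non-zero elements
of `S` form a `K`-basis of `A`. -/
def IsContractedAlgebra (K : Type*) [Field K] {S A : Type*} [SemigroupWithZero S]
    [NonUnitalRing A] [Module K A] (f : S → A) : Prop :=
  f 0 = 0 ∧ (∀ s t : S, f (s * t) = f s * f t) ∧
  LinearIndependent K (fun s : {s : S // s ≠ 0} => f s.1) ∧
  Submodule.span K (Set.range fun s : {s : S // s ≠ 0} => f s.1) = ⊤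
/-- `IsCC1Sg n a b c S u v` asserts that `S` is the nilpotent semigroup of order `n`
with zero given by the presentation
`⟨u, v ∣ u^(n-1) = u^n, u*v = u^a, v*u = u^b, v*v = u^c⟩`:
its distinct elements are `u, u², …, u^(n-2), v` and the zero `u^(n-1)`. -/
def IsCC1Sg (n a b c : ℕ) (S : Type*) [SemigroupWithZero S] (u v : S) : Prop :=
  mpow u (n - 1) = 0 ∧ u * v = mpow u a ∧ v * u = mpow u b ∧ v * v = mpow u c ∧
  v ≠ 0 ∧ (∀ i, 1 ≤ i → i ≤ n - 2 → mpow u i ≠ 0) ∧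
  (∀ i j, 1 ≤ i → i ≤ n - 2 → 1 ≤ j → j ≤ n - 2 → mpow u i = mpow u j → i = j) ∧
  (∀ i, 1 ≤ i → i ≤ n - 2 → v ≠ mpow u i) ∧
  (∀ s : S, s = 0 ∨ s = v ∨ ∃ i, 1 ≤ i ∧ i ≤ n - 2 ∧ s = mpow u i)

/-!
In a contracted semigroup algebra `KS` with basis the non-zero elements of `S`, right
multiplication by `w ∈ S` sends the basis vector `s` to `s * w`. If `s * w ≠ 0` is hit by no
other basis vector, the coefficient of `s` in any `x` equals the coefficient of `s * w` in
`x * w`; so an element of the annihilator has no component along such an `s`. In `H_{n-1}` and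
`J_{n-1}` right multiplication by `u` separates `u, …, u^(n-3)`, and in `J_{n-1}` right
multiplication by `v` separates `v` (as `v² = u^(n-2) ≠ 0`), while in `H_{n-1}` both `v` and
`u^(n-2)` annihilate the semigroup. Comparing the dimensions of the annihilators shows that the
algebras are not isomorphic.
-/

section Mpow

variable {S : Type*} [SemigroupWithZero S]

lemma mpow_succ (x : S) {i : ℕ} (hi : 1 ≤ i) : mpow x (i + 1) = mpow x i * x := by
  obtain ⟨k, rfl⟩ := Nat.exists_eq_add_of_le' hi
  rfl

lemma mpow_add (x : S) {i j : ℕ} (hi : 1 ≤ i) (hj : 1 ≤ j) :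
    mpow x (i + j) = mpow x i * mpow x j := by
  induction j, hj using Nat.le_induction with
  | base => exact mpow_succ x hi
  | succ j hj ih =>
    rw [← add_assoc, mpow_succ x (by omega), ih, mpow_succ x hj, mul_assoc]

lemma mpow_eq_zero_of_le (x : S) {m k : ℕ} (hm : 1 ≤ m) (h : mpow x m = 0) (hk : m ≤ k) :
    mpow x k = 0 := by
  induction k, hk using Nat.le_induction with
  | base => exact h
  | succ k hk ih => rw [mpow_succ x (hm.trans hk), ih, zero_mul]

end Mpow

def IsRightSeparated {S : Type*} [SemigroupWithZero S] (s : S) : Prop :=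
  ∃ w, s * w ≠ 0 ∧ ∀ s' ≠ 0, s' * w = s * w → s' = s

namespace IsCC1Sg

variable {S : Type*} [SemigroupWithZero S] {n a b c : ℕ} {u v : S}

lemma mpow_sub_one (h : IsCC1Sg n a b c S u v) : mpow u (n - 1) = 0 := h.1

lemma u_mul_v (h : IsCC1Sg n a b c S u v) : u * v = mpow u a := h.2.1

lemma v_mul_u (h : IsCC1Sg n a b c S u v) : v * u = mpow u b := h.2.2.1

lemma v_mul_v (h : IsCC1Sg n a b c S u v) : v * v = mpow u c := h.2.2.2.1

lemma v_ne_zero (h : IsCC1Sg n a b c S u v) : v ≠ 0 := h.2.2.2.2.1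

lemma mpow_ne_zero (h : IsCC1Sg n a b c S u v) {i : ℕ} (hi1 : 1 ≤ i) (hi : i ≤ n - 2) :
    mpow u i ≠ 0 :=
  h.2.2.2.2.2.1 i hi1 hi

lemma mpow_inj (h : IsCC1Sg n a b c S u v) {i j : ℕ} (hi1 : 1 ≤ i) (hi : i ≤ n - 2)
    (hj1 : 1 ≤ j) (hj : j ≤ n - 2) (hij : mpow u i = mpow u j) : i = j :=
  h.2.2.2.2.2.2.1 i j hi1 hi hj1 hj hij

lemma v_ne_mpow (h : IsCC1Sg n a b c S u v) {i : ℕ} (hi1 : 1 ≤ i) (hi : i ≤ n - 2) :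
    v ≠ mpow u i :=
  h.2.2.2.2.2.2.2.1 i hi1 hi

lemma eq_zero_or_eq_v_or_eq_mpow (h : IsCC1Sg n a b c S u v) (s : S) :
    s = 0 ∨ s = v ∨ ∃ i, 1 ≤ i ∧ i ≤ n - 2 ∧ s = mpow u i :=
  h.2.2.2.2.2.2.2.2 s

lemma mpow_eq_zero (h : IsCC1Sg n (n - 1) (n - 1) c S u v) (hn : 2 ≤ n) {k : ℕ}
    (hk : n - 1 ≤ k) : mpow u k = 0 :=
  mpow_eq_zero_of_le u (by omega) h.mpow_sub_one hk

lemma mpow_mul_v (h : IsCC1Sg n (n - 1) (n - 1) c S u v) {i : ℕ} (hi : 1 ≤ i) :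
    mpow u i * v = 0 := by
  induction i, hi using Nat.le_induction with
  | base => rw [show mpow u 1 = u from rfl, h.u_mul_v, h.mpow_sub_one]
  | succ i hi ih => rw [mpow_succ u hi, mul_assoc, h.u_mul_v, h.mpow_sub_one, mul_zero]

lemma v_mul_mpow (h : IsCC1Sg n (n - 1) (n - 1) c S u v) {i : ℕ} (hi : 1 ≤ i) :
    v * mpow u i = 0 := by
  induction i, hi using Nat.le_induction with
  | base => rw [show mpow u 1 = u from rfl, h.v_mul_u, h.mpow_sub_one]
  | succ i hi ih => rw [mpow_succ u hi, ← mul_assoc, ih, zero_mul]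

lemma mul_comm (h : IsCC1Sg n (n - 1) (n - 1) c S u v) (s t : S) : s * t = t * s := by
  rcases h.eq_zero_or_eq_v_or_eq_mpow s with rfl | rfl | ⟨i, hi, -, rfl⟩ <;>
    rcases h.eq_zero_or_eq_v_or_eq_mpow t with rfl | rfl | ⟨j, hj, -, rfl⟩
  all_goals try first
    | rfl
    | simp (disch := assumption) only [zero_mul, mul_zero, h.v_mul_mpow, h.mpow_mul_v]
  rw [← mpow_add u hi hj, ← mpow_add u hj hi, Nat.add_comm]

lemma mpow_sub_two_annihilates (h : IsCC1Sg n (n - 1) (n - 1) c S u v) (hn : 3 ≤ n) (t : S) :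
    mpow u (n - 2) * t = 0 ∧ t * mpow u (n - 2) = 0 := by
  suffices hleft : mpow u (n - 2) * t = 0 from ⟨hleft, h.mul_comm t _ ▸ hleft⟩
  rcases h.eq_zero_or_eq_v_or_eq_mpow t with rfl | rfl | ⟨j, hj, -, rfl⟩
  · exact mul_zero _
  · exact h.mpow_mul_v (by omega)
  · rw [← mpow_add u (by omega) hj]
    exact h.mpow_eq_zero (by omega) (by omega)

lemma eq_mpow_of_ne (h : IsCC1Sg n (n - 1) (n - 1) c S u v) {s : S} (hs : s ≠ 0)
    (hsv : s ≠ v) (hstop : s ≠ mpow u (n - 2)) :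
    ∃ k, 1 ≤ k ∧ k ≤ n - 3 ∧ s = mpow u k := by
  rcases h.eq_zero_or_eq_v_or_eq_mpow s with h0 | hv | ⟨k, hk1, hk2, rfl⟩
  · exact absurd h0 hs
  · exact absurd hv hsv
  · have : k ≠ n - 2 := by rintro rfl; exact hstop rfl
    exact ⟨k, hk1, by omega, rfl⟩

lemma isRightSeparated_mpow (h : IsCC1Sg n (n - 1) (n - 1) c S u v) (hn : 3 ≤ n) {k : ℕ}
    (hk1 : 1 ≤ k) (hk : k ≤ n - 3) : IsRightSeparated (mpow u k) := by
  refine ⟨u, ?_⟩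
  rw [← mpow_succ u hk1]
  have hk0 : mpow u (k + 1) ≠ 0 := h.mpow_ne_zero (by omega) (by omega)
  refine ⟨hk0, fun s hs hsu => ?_⟩
  rcases h.eq_zero_or_eq_v_or_eq_mpow s with rfl | rfl | ⟨m, hm1, hm2, rfl⟩
  · exact absurd rfl hs
  · exact absurd (h.v_mul_u.trans h.mpow_sub_one ▸ hsu).symm hk0
  · rw [← mpow_succ u hm1] at hsu
    obtain rfl | hm := eq_or_ne m (n - 2)
    · exact absurd ((h.mpow_eq_zero (by omega) (by omega)).symm.trans hsu) hk0.symm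
    · have := h.mpow_inj (by omega) (by omega) (by omega) (by omega) hsu
      rw [show m = k by omega]

lemma isRightSeparated_v (h : IsCC1Sg n (n - 1) (n - 1) c S u v) (hc1 : 1 ≤ c)
    (hc : c ≤ n - 2) : IsRightSeparated v := by
  have hvv : v * v ≠ 0 := h.v_mul_v ▸ h.mpow_ne_zero hc1 hc
  refine ⟨v, hvv, fun s hs hsv => ?_⟩
  rcases h.eq_zero_or_eq_v_or_eq_mpow s with h0 | rfl | ⟨j, hj, -, rfl⟩
  · exact absurd h0 hs
  · rfl
  · exact absurd ((h.mpow_mul_v hj).symm.trans hsv).symm hvv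

lemma v_annihilates (h : IsCC1Sg n (n - 1) (n - 1) c S u v) (hn : 2 ≤ n) (hc : n - 1 ≤ c)
    (t : S) : v * t = 0 ∧ t * v = 0 := by
  have hvv : v * v = 0 := h.v_mul_v.trans (h.mpow_eq_zero hn hc)
  rcases h.eq_zero_or_eq_v_or_eq_mpow t with rfl | rfl | ⟨j, hj, -, rfl⟩
  · exact ⟨mul_zero _, zero_mul _⟩
  · exact ⟨hvv, hvv⟩
  · exact ⟨h.v_mul_mpow hj, h.mpow_mul_v hj⟩

end IsCC1Sg

namespace IsContractedAlgebra

variable {K : Type*} [Field K] {S A : Type*} [SemigroupWithZero S]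
  [NonUnitalRing A] [Module K A] {f : S → A}

protected lemma map_zero (hf : IsContractedAlgebra K f) : f 0 = 0 := hf.1

protected lemma map_mul (hf : IsContractedAlgebra K f) (s t : S) : f (s * t) = f s * f t :=
  hf.2.1 s t

lemma linearIndependent (hf : IsContractedAlgebra K f) :
    LinearIndependent K (fun s : {s : S // s ≠ 0} => f s) :=
  hf.2.2.1

noncomputable def basis (hf : IsContractedAlgebra K f) : Module.Basis {s : S // s ≠ 0} K A :=
  Module.Basis.mk hf.linearIndependent hf.2.2.2.ge

lemma basis_apply (hf : IsContractedAlgebra K f) (s : {s : S // s ≠ 0}) :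
    hf.basis s = f s := Module.Basis.mk_apply _ _ _

lemma map_ne_zero (hf : IsContractedAlgebra K f) {s : S} (hs : s ≠ 0) : f s ≠ 0 :=
  hf.basis_apply ⟨s, hs⟩ ▸ hf.basis.ne_zero _

lemma finrank_span_pair (hf : IsContractedAlgebra K f) {s t : S} (hs : s ≠ 0) (ht : t ≠ 0)
    (hst : s ≠ t) : Module.finrank K (Submodule.span K {f s, f t}) = 2 := by
  have hli : LinearIndependent K ![f s, f t] := by
    convert hf.linearIndependent.comp ![⟨s, hs⟩, ⟨t, ht⟩] (by
      intro i j
      fin_cases i <;> fin_cases j <;> simp [hst, hst.symm]) using 1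
    ext i
    fin_cases i <;> rfl
  rw [← Matrix.range_cons_cons_empty (f s) (f t) ![], finrank_span_eq_card hli]
  simp

variable [SMulCommClass K A A] [IsScalarTower K A A]

lemma mul_comm (hf : IsContractedAlgebra K f) (hS : ∀ s t : S, s * t = t * s) (x y : A) :
    x * y = y * x := by
  have hmul : LinearMap.mul K A = (LinearMap.mul K A).flip :=
    hf.basis.ext fun s => hf.basis.ext fun t => by
      simp only [LinearMap.mul_apply', LinearMap.flip_apply, basis_apply, ← hf.map_mul, hS]
  exact LinearMap.congr_fun₂ hmul x y

lemma map_mem_twoSidedAnn (hf : IsContractedAlgebra K f) {z : S}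
    (hz : ∀ t, z * t = 0 ∧ t * z = 0) : f z ∈ twoSidedAnn K A := by
  have hleft : LinearMap.mul K A (f z) = 0 := hf.basis.ext fun t => by
    simp only [LinearMap.mul_apply', basis_apply, ← hf.map_mul, (hz t).1, hf.map_zero, LinearMap.zero_apply]
  have hright : (LinearMap.mul K A).flip (f z) = 0 := hf.basis.ext fun t => by
    simp only [LinearMap.flip_apply, LinearMap.mul_apply', basis_apply, ← hf.map_mul, (hz t).2,
      hf.map_zero, LinearMap.zero_apply]
  exact ⟨LinearMap.congr_fun hleft, LinearMap.congr_fun hright⟩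

lemma basis_repr_mul_apply (hf : IsContractedAlgebra K f) {w : S} (i : {s : S // s ≠ 0})
    (hiw : i.1 * w ≠ 0) (huniq : ∀ s : {s : S // s ≠ 0}, s.1 * w = i.1 * w → s = i) (x : A) :
    hf.basis.repr (x * f w) ⟨i * w, hiw⟩ = hf.basis.repr x i := by
  classical
  have key : Finsupp.lapply ⟨i * w, hiw⟩ ∘ₗ hf.basis.repr.toLinearMap ∘ₗ
      (LinearMap.mul K A).flip (f w) = Finsupp.lapply i ∘ₗ hf.basis.repr.toLinearMap := by
    refine hf.basis.ext fun s => ?_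
    simp only [LinearMap.comp_apply, LinearMap.flip_apply, LinearMap.mul_apply',
      LinearEquiv.coe_coe, Finsupp.lapply_apply, Module.Basis.repr_self]
    rw [hf.basis_apply, ← hf.map_mul]
    by_cases hsw : s.1 * w = 0
    · have hsi : s ≠ i := fun hsi => hiw (hsi ▸ hsw)
      rw [hsw, hf.map_zero, map_zero, Finsupp.zero_apply, Finsupp.single_eq_of_ne hsi.symm]
    · rw [← hf.basis_apply ⟨_, hsw⟩, Module.Basis.repr_self, Finsupp.single_apply,
        Finsupp.single_apply]
      refine if_congr ⟨fun he => huniq s (congrArg Subtype.val he), ?_⟩ rfl rfl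
      rintro rfl
      rfl
  exact LinearMap.congr_fun key x

lemma twoSidedAnn_eq_span (hf : IsContractedAlgebra K f) (Z : Set S)
    (hZ : ∀ z ∈ Z, ∀ t, z * t = 0 ∧ t * z = 0)
    (hsep : ∀ s ≠ 0, s ∉ Z → IsRightSeparated s) :
    twoSidedAnn K A = Submodule.span K (f '' Z) := by
  refine le_antisymm (fun x hx => ?_) (Submodule.span_le.mpr ?_)
  · have hsupp : x ∈ Submodule.span K (hf.basis '' {i | i.1 ∈ Z}) := by
      refine hf.basis.mem_span_image.mpr fun i hi => ?_
      by_contra hiZ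
      obtain ⟨w, hiw, huniq⟩ := hsep i i.2 hiZ
      refine Finsupp.mem_support_iff.mp hi ?_
      rw [← hf.basis_repr_mul_apply i hiw (fun s hs => Subtype.ext (huniq s s.2 hs)), hx.1,
        map_zero, Finsupp.zero_apply]
    refine Submodule.span_mono ?_ hsupp
    rintro _ ⟨i, hi, rfl⟩
    exact ⟨i, hi, (hf.basis_apply i).symm⟩
  · rintro _ ⟨z, hz, rfl⟩
    exact hf.map_mem_twoSidedAnn (hZ z hz)

end IsContractedAlgebra

namespace IsCC1Sg

variable {K : Type*} [Field K] {S A : Type*} [SemigroupWithZero S]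
  [NonUnitalRing A] [Module K A] [SMulCommClass K A A] [IsScalarTower K A A]
  {f : S → A} {n c : ℕ} {u v : S}

lemma twoSidedAnn_eq_span_pair (h : IsCC1Sg n (n - 1) (n - 1) c S u v) (hn : 3 ≤ n)
    (hc : n - 1 ≤ c) (hf : IsContractedAlgebra K f) :
    twoSidedAnn K A = Submodule.span K {f v, f (mpow u (n - 2))} := by
  rw [← Set.image_pair]
  refine hf.twoSidedAnn_eq_span _ ?_ fun s hs hsZ => ?_
  · rintro z (rfl | rfl) t
    · exact h.v_annihilates (by omega) hc t
    · exact h.mpow_sub_two_annihilates hn t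
  · obtain ⟨k, hk1, hk, rfl⟩ := h.eq_mpow_of_ne hs (fun hv => hsZ (.inl hv))
      (fun htop => hsZ (.inr htop))
    exact h.isRightSeparated_mpow hn hk1 hk

lemma twoSidedAnn_eq_span_singleton (h : IsCC1Sg n (n - 1) (n - 1) c S u v) (hn : 3 ≤ n)
    (hc1 : 1 ≤ c) (hc : c ≤ n - 2) (hf : IsContractedAlgebra K f) :
    twoSidedAnn K A = Submodule.span K {f (mpow u (n - 2))} := by
  rw [← Set.image_singleton]
  refine hf.twoSidedAnn_eq_span _ (fun z hz t => hz ▸ h.mpow_sub_two_annihilates hn t)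
    fun s hs hsZ => ?_
  obtain rfl | hsv := eq_or_ne s v
  · exact h.isRightSeparated_v hc1 hc
  · obtain ⟨k, hk1, hk, rfl⟩ := h.eq_mpow_of_ne hs hsv hsZ
    exact h.isRightSeparated_mpow hn hk1 hk

end IsCC1Sg

section

variable {K A B : Type*} [Field K] [NonUnitalRing A] [Module K A] [SMulCommClass K A A]
  [IsScalarTower K A A] [NonUnitalRing B] [Module K B] [SMulCommClass K B B] [IsScalarTower K B B]

lemma twoSidedAnn_map_of_bijective (e : A →ₙₐ[K] B) (he : Function.Bijective e) :
    (twoSidedAnn K A).map (e : A →ₗ[K] B) = twoSidedAnn K B := by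
  refine le_antisymm ?_ fun y hy => ?_
  · rintro _ ⟨x, hx, rfl⟩
    constructor <;> intro y <;> obtain ⟨x', rfl⟩ := he.2 y
    · exact (map_mul e x x').symm.trans (by rw [hx.1, map_zero])
    · exact (map_mul e x' x).symm.trans (by rw [hx.2, map_zero])
  · obtain ⟨x, rfl⟩ := he.2 y
    refine ⟨x, ⟨fun x' => he.1 ?_, fun x' => he.1 ?_⟩, rfl⟩
    · rw [map_mul, map_zero, hy.1]
    · rw [map_mul, map_zero, hy.2]

lemma finrank_twoSidedAnn_eq_of_bijective (e : A →ₙₐ[K] B) (he : Function.Bijective e) :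
    Module.finrank K (twoSidedAnn K A) = Module.finrank K (twoSidedAnn K B) := by
  rw [← twoSidedAnn_map_of_bijective e he,
    ← (LinearEquiv.ofBijective (e : A →ₗ[K] B) he).finrank_map_eq]
  rfl

end

/-- For a field `K` and `n ≥ 5`, the contracted semigroup algebras `K H_(n-1)` and
`K J_(n-1)` are not isomorphic: both are commutative, but the two-sided annihilator of
`K H_(n-1)` has dimension `2` (spanned by `v` and `u^(n-2)`) while that of `K J_(n-1)`
has dimension `1` (spanned by `u^(n-2)`). -/
theorem statement12 {K : Type*} [Field K] (n : ℕ) (hn : 5 ≤ n)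
    {SH : Type*} [SemigroupWithZero SH] (uH vH : SH)
    (hH : IsCC1Sg n (n - 1) (n - 1) (2 * n - 4) SH uH vH)
    {SJ : Type*} [SemigroupWithZero SJ] (uJ vJ : SJ)
    (hJ : IsCC1Sg n (n - 1) (n - 1) (n - 2) SJ uJ vJ)
    {A : Type*} [NonUnitalRing A] [Module K A] [SMulCommClass K A A] [IsScalarTower K A A]
    {B : Type*} [NonUnitalRing B] [Module K B] [SMulCommClass K B B] [IsScalarTower K B B]
    (f : SH → A) (hf : IsContractedAlgebra K f)
    (g : SJ → B) (hg : IsContractedAlgebra K g) :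
    (∀ a b : A, a * b = b * a) ∧ (∀ a b : B, a * b = b * a) ∧
    twoSidedAnn K A = Submodule.span K {f vH, f (mpow uH (n - 2))} ∧
    Module.finrank K (twoSidedAnn K A) = 2 ∧
    twoSidedAnn K B = Submodule.span K {g (mpow uJ (n - 2))} ∧
    Module.finrank K (twoSidedAnn K B) = 1 ∧
    ¬ ∃ e : A →ₙₐ[K] B, Function.Bijective e := by
  have hA := hH.twoSidedAnn_eq_span_pair (by omega) (by omega) hf
  have hB := hJ.twoSidedAnn_eq_span_singleton (by omega) (by omega) le_rfl hg
  have hA2 : Module.finrank K (twoSidedAnn K A) = 2 := by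
    rw [hA]
    exact hf.finrank_span_pair hH.v_ne_zero (hH.mpow_ne_zero (by omega) le_rfl)
      (hH.v_ne_mpow (by omega) le_rfl)
  have hB1 : Module.finrank K (twoSidedAnn K B) = 1 := by
    rw [hB]
    exact finrank_span_singleton (hg.map_ne_zero (hJ.mpow_ne_zero (by omega) le_rfl))
  refine ⟨hf.mul_comm hH.mul_comm, hg.mul_comm hJ.mul_comm, hA, hA2, hB, hB1, ?_⟩
  rintro ⟨e, he⟩
  have := finrank_twoSidedAnn_eq_of_bijective e he
  omega
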